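/- The coherence of a Kronecker-structured subspace equals the product of the coherences of the factor subspaces: μ(A⊗B) = μ(A)·μ(B). -/

import Mathlib

open Matrix
open scoped Kronecker

/-- Orthogonal projection operator onto the column space of `M`. -/
noncomputable def proj {I J : Type*} [Fintype I] [Fintype J] [DecidableEq J]
    (M : Matrix I J ℝ) : Matrix I I ℝ :=
  M * (Mᵀ * M)⁻¹ * Mᵀ

/-- Coherence of (the column space of) a matrix `M`:
`μ(M) = (m/n) · maxⱼ ‖Uᴹ eⱼ‖₂²`. -/
noncomputable def coherence {I J : Type*} [Fintype I] [Fintype J] [DecidableEq J]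
    [Nonempty I] (M : Matrix I J ℝ) : ℝ :=
  ((Fintype.card I : ℝ) / (Fintype.card J : ℝ)) *
    Finset.univ.sup' Finset.univ_nonempty (fun j : I => ∑ i, (proj M i j) ^ 2)

/-!
The projector onto the column space of `A ⊗ₖ B` is `proj A ⊗ₖ proj B`, since transposes,
products and inverses all commute with `⊗ₖ`. Hence the squared norm of column `(j₁, j₂)` is the
product of the squared norms of columns `j₁` and `j₂`, the maximum of such products of
nonnegative numbers is the product of the maxima, and the dimension ratios multiply as well.
-/

theorem proj_kronecker {I₁ J₁ I₂ J₂ : Type*}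
    [Fintype I₁] [Fintype J₁] [Fintype I₂] [Fintype J₂] [DecidableEq J₁] [DecidableEq J₂]
    (A : Matrix I₁ J₁ ℝ) (B : Matrix I₂ J₂ ℝ) :
    proj (A ⊗ₖ B) = proj A ⊗ₖ proj B := by
  unfold proj
  rw [← kroneckerMap_transpose, ← mul_kronecker_mul, inv_kronecker,
    mul_kronecker_mul, mul_kronecker_mul]

theorem sum_sq_kronecker_apply {R l m n p : Type*} [CommSemiring R] [Fintype l] [Fintype n]
    (A : Matrix l m R) (B : Matrix n p R) (j : m × p) :
    ∑ i, (A ⊗ₖ B) i j ^ 2 = (∑ i, A i j.1 ^ 2) * ∑ i, B i j.2 ^ 2 := by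
  rw [Fintype.sum_prod_type, Finset.sum_mul_sum]
  simp only [kroneckerMap_apply, mul_pow]

theorem Finset.sup'_product_mul_of_nonneg {R α β : Type*}
    [Semiring R] [LinearOrder R] [IsOrderedRing R]
    {s : Finset α} {t : Finset β} (hs : s.Nonempty) (ht : t.Nonempty)
    {f : α → R} {g : β → R} (hf : ∀ a ∈ s, 0 ≤ f a) (hg : ∀ b ∈ t, 0 ≤ g b) :
    (s ×ˢ t).sup' (hs.product ht) (fun p => f p.1 * g p.2) = s.sup' hs f * t.sup' ht g := by
  apply le_antisymm
  · refine Finset.sup'_le _ _ fun p hp => ?_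
    obtain ⟨ha, hb⟩ := Finset.mem_product.mp hp
    have hfa := Finset.le_sup' f ha
    exact mul_le_mul hfa (Finset.le_sup' g hb) (hg _ hb) ((hf _ ha).trans hfa)
  · obtain ⟨a, ha, hfa⟩ := Finset.exists_mem_eq_sup' hs f
    obtain ⟨b, hb, hgb⟩ := Finset.exists_mem_eq_sup' ht g
    rw [hfa, hgb]
    exact Finset.le_sup' (fun p : α × β => f p.1 * g p.2) (Finset.mk_mem_product ha hb)

theorem coherence_kronecker_general {I₁ J₁ I₂ J₂ : Type*}
    [Fintype I₁] [Fintype J₁] [Fintype I₂] [Fintype J₂]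
    [DecidableEq J₁] [DecidableEq J₂] [Nonempty I₁] [Nonempty I₂]
    (A : Matrix I₁ J₁ ℝ) (B : Matrix I₂ J₂ ℝ) :
    coherence (A ⊗ₖ B) = coherence A * coherence B := by
  have hcolumns : (fun j => ∑ i, proj (A ⊗ₖ B) i j ^ 2) =
      fun j : I₁ × I₂ => (∑ i, proj A i j.1 ^ 2) * ∑ i, proj B i j.2 ^ 2 := by
    funext j
    rw [proj_kronecker, sum_sq_kronecker_apply]
  have hmax := Finset.sup'_product_mul_of_nonneg Finset.univ_nonempty Finset.univ_nonempty
    (f := fun a => ∑ i, proj A i a ^ 2) (g := fun b => ∑ i, proj B i b ^ 2)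
    (fun _ _ => Finset.sum_nonneg fun _ _ => sq_nonneg _)
    (fun _ _ => Finset.sum_nonneg fun _ _ => sq_nonneg _)
  simp only [Finset.univ_product_univ] at hmax
  unfold coherence
  rw [hcolumns, hmax, Fintype.card_prod, Fintype.card_prod]
  push_cast
  ring

/-- The coherence of a Kronecker-structured subspace equals the product of the
coherences of the factor subspaces: `μ(A ⊗ B) = μ(A) · μ(B)`. -/
theorem coherence_kronecker {I₁ J₁ I₂ J₂ : Type*}
    [Fintype I₁] [Fintype J₁] [Fintype I₂] [Fintype J₂]
    [DecidableEq J₁] [DecidableEq J₂] [Nonempty I₁] [Nonempty I₂]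
    (A : Matrix I₁ J₁ ℝ) (B : Matrix I₂ J₂ ℝ)
    (hA : IsUnit (Aᵀ * A).det) (hB : IsUnit (Bᵀ * B).det) :
    coherence (A ⊗ₖ B) = coherence A * coherence B :=
  coherence_kronecker_general A B
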